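/- arXiv:2305.02373 — 5 statements merged into one kernel-verified Lean document; each statement's English description precedes it below -/
import Mathlib

section
/- Let T and C be independent nonnegative random variables, Δ = 1{T ≤ C}, T̃ = min(T,C), and G(t) = P(C > t). Assume C has a continuous distribution (so G(t−) = G(t)) and G(τ) > 0 for fixed τ. Then E[ Δ(τ) · min(T̃, τ) / G(min(T̃, τ) ∧ T) ] = E[min(T, τ)], where Δ(τ) = 1{C > min(τ, T)}. -/
open MeasureTheory ProbabilityTheory Set

/-!
Write the integrand as `1{a(T) < C} φ(T)` with `a t = min t τ` and `φ t = a t / G (a t)`.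
By independence the joint law of `(T, C)` is the product of the marginals, so integrating out
`C` first (Fubini) replaces the indicator by its conditional mean `P(C > a t) = G (a t)`,
which cancels the inverse-probability weight and leaves `E[min(T, τ)]`.
-/

theorem MeasureTheory.antitone_measureReal_setOf_lt {Ω : Type*} [MeasurableSpace Ω]
    (μ : Measure Ω) [IsFiniteMeasure μ] (Y : Ω → ℝ) : Antitone fun s ↦ μ.real {ω | s < Y ω} :=
  fun _ _ hst ↦ measureReal_mono fun _ h ↦ hst.trans_lt h

namespace ProbabilityTheory.IndepFun

variable {Ω α β : Type*} [MeasurableSpace Ω] [MeasurableSpace α] [MeasurableSpace β]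
  {μ : Measure Ω} [IsFiniteMeasure μ] {X : Ω → α}

theorem integral_comp_prodMk_eq_integral_integral {E : Type*} [NormedAddCommGroup E]
    [NormedSpace ℝ E] {Y : Ω → β} (hXY : IndepFun X Y μ) (hX : AEMeasurable X μ)
    (hY : AEMeasurable Y μ) {F : α × β → E} (hF : Integrable F ((μ.map X).prod (μ.map Y))) :
    ∫ ω, F (X ω, Y ω) ∂μ = ∫ x, ∫ y, F (x, y) ∂(μ.map Y) ∂(μ.map X) := by
  have hmap : μ.map (fun ω ↦ (X ω, Y ω)) = (μ.map X).prod (μ.map Y) :=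
    (indepFun_iff_map_prod_eq_prod_map_map hX hY).mp hXY
  rw [← integral_prod F hF, ← hmap,
    integral_map (hX.prodMk hY) (hmap ▸ hF.aestronglyMeasurable)]

theorem integral_ite_lt {Y : Ω → ℝ} (hXY : IndepFun X Y μ) (hX : AEMeasurable X μ)
    (hY : Measurable Y) {a φ : α → ℝ} (ha : Measurable a) (hφ : Measurable φ)
    (hφX : Integrable (fun ω ↦ φ (X ω)) μ) :
    ∫ ω, (if a (X ω) < Y ω then φ (X ω) else 0) ∂μ
      = ∫ ω, φ (X ω) * μ.real {ω' | a (X ω) < Y ω'} ∂μ := by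
  set F : α × ℝ → ℝ := fun p ↦ if a p.1 < p.2 then φ p.1 else 0
  have hFm : Measurable F :=
    Measurable.ite (measurableSet_lt (ha.comp measurable_fst) measurable_snd)
      (hφ.comp measurable_fst) measurable_const
  have hF : Integrable F ((μ.map X).prod (μ.map Y)) := by
    refine (((integrable_map_measure hφ.aestronglyMeasurable hX).mpr hφX).comp_fst _).mono
      hFm.aestronglyMeasurable (ae_of_all _ fun p ↦ ?_)
    by_cases h : a p.1 < p.2 <;> simp [F, h]
  have hinner (x : α) : ∫ y, F (x, y) ∂(μ.map Y) = φ x * μ.real {ω' | a x < Y ω'} := by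
    have hFx : (fun y ↦ F (x, y)) = (Ioi (a x)).indicator fun _ ↦ φ x := by
      ext y
      simp [F, indicator_apply]
    rw [hFx, integral_indicator_const _ measurableSet_Ioi, smul_eq_mul, mul_comm,
      map_measureReal_apply hY measurableSet_Ioi]
    rfl
  have hsurv : Measurable fun x ↦ μ.real {ω' | a x < Y ω'} :=
    (antitone_measureReal_setOf_lt μ Y).measurable.comp ha
  calc ∫ ω, (if a (X ω) < Y ω then φ (X ω) else 0) ∂μ
      = ∫ x, ∫ y, F (x, y) ∂(μ.map Y) ∂(μ.map X) :=
        hXY.integral_comp_prodMk_eq_integral_integral hX hY.aemeasurable hF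
    _ = ∫ x, φ x * μ.real {ω' | a x < Y ω'} ∂(μ.map X) := by simp_rw [hinner]
    _ = ∫ ω, φ (X ω) * μ.real {ω' | a (X ω) < Y ω'} ∂μ :=
        integral_map hX (hφ.mul hsurv).aestronglyMeasurable

end ProbabilityTheory.IndepFun

theorem stmt4_general
    {Ω : Type*} [MeasurableSpace Ω] (μ : Measure Ω) [IsProbabilityMeasure μ]
    (T C : Ω → ℝ) (hTm : Measurable T) (hCm : Measurable C)
    (hInd : ProbabilityTheory.IndepFun T C μ)
    (G : ℝ → ℝ) (hG : ∀ s, G s = (μ {ω | s < C ω}).toReal)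
    (τ : ℝ) (hGτ : 0 < G τ)
    (hInt : Integrable (fun ω => min (T ω) τ) μ) :
    ∫ ω, (if min (T ω) τ < C ω then
        min (min (T ω) (C ω)) τ / G (min (min (T ω) (C ω)) τ) else 0) ∂μ
      = ∫ ω, min (T ω) τ ∂μ := by
  have hGanti : Antitone G := by
    rw [funext hG]
    exact antitone_measureReal_setOf_lt μ C
  have hGpos (t : ℝ) : 0 < G (min t τ) := hGτ.trans_le (hGanti (min_le_right t τ))
  set φ : ℝ → ℝ := fun t ↦ min t τ / G (min t τ)
  have hmin : Measurable fun t : ℝ ↦ min t τ := measurable_id.min measurable_const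
  have hφ : Measurable φ := hmin.div (hGanti.measurable.comp hmin)
  have hφT : Integrable (fun ω ↦ φ (T ω)) μ := by
    refine (hInt.div_const (G τ)).mono (hφ.comp hTm).aestronglyMeasurable
      (ae_of_all _ fun ω ↦ ?_)
    simp only [φ, Real.norm_eq_abs, abs_div, abs_of_pos hGτ, abs_of_pos (hGpos _)]
    exact div_le_div_of_nonneg_left (abs_nonneg _) hGτ (hGanti (min_le_right _ _))
  calc ∫ ω, (if min (T ω) τ < C ω then
        min (min (T ω) (C ω)) τ / G (min (min (T ω) (C ω)) τ) else 0) ∂μ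
      = ∫ ω, (if min (T ω) τ < C ω then φ (T ω) else 0) ∂μ := by
        refine integral_congr_ae (ae_of_all _ fun ω ↦ ?_)
        by_cases h : min (T ω) τ < C ω
        · simp only [h, if_true, φ, min_right_comm _ (C ω), min_eq_left h.le]
        · simp only [h, if_false]
    _ = ∫ ω, φ (T ω) * G (min (T ω) τ) ∂μ := by
        rw [hInd.integral_ite_lt hTm.aemeasurable hCm hmin hφ hφT]
        simp only [hG, measureReal_def]
    _ = ∫ ω, min (T ω) τ ∂μ := by
        simp only [φ, div_mul_cancel₀ _ (hGpos _).ne']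

/-- IPCW identity: E[Δ(τ)·min(T̃,τ)/G(min(T̃,τ))] = E[min(T,τ)],
    with Δ(τ) = 1{C > min(T,τ)}, for continuous censoring distribution. -/
theorem stmt4
    {Ω : Type*} [MeasurableSpace Ω] (μ : Measure Ω) [IsProbabilityMeasure μ]
    (T C : Ω → ℝ) (hTm : Measurable T) (hCm : Measurable C)
    (hT0 : ∀ ω, 0 ≤ T ω) (hC0 : ∀ ω, 0 ≤ C ω)
    (hInd : ProbabilityTheory.IndepFun T C μ)
    (hCcont : ∀ t : ℝ, μ {ω | C ω = t} = 0)
    (G : ℝ → ℝ) (hG : ∀ s, G s = (μ {ω | s < C ω}).toReal)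
    (τ : ℝ) (hτ : 0 < τ) (hGτ : 0 < G τ)
    (hInt : Integrable (fun ω => min (T ω) τ) μ) :
    ∫ ω, (if min (T ω) τ < C ω then
        min (min (T ω) (C ω)) τ / G (min (min (T ω) (C ω)) τ) else 0) ∂μ
      = ∫ ω, min (T ω) τ ∂μ :=
  stmt4_general μ T C hTm hCm hInd G hG τ hGτ hInt
end

section
/- Let Λ, Λ̂ : [0,τ] → ℝ be nondecreasing right-continuous functions with Λ(0) = Λ̂(0) = 0, and let S(t) = exp(−Λ(t)), Ŝ(t) = exp(−Λ̂(t)) be continuous (i.e., Λ, Λ̂ continuous). Then the Duhamel identity holds: S(t) − Ŝ(t) = Ŝ(t) ∫₀^t (S(u)/Ŝ(u)) (dΛ̂(u) − dΛ(u)) for all t ∈ [0,τ]. -/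
/-!
Since `S / Ŝ = exp (Λ̂ - Λ)`, the identity is the chain rule
`φ (g t) - φ (g 0) = ∫ φ' ∘ g dΛ̂ - ∫ φ' ∘ g dΛ` for `φ = exp` and `g = Λ̂ - Λ`.
On a short interval `[u, v]` the mean value and intermediate value theorems write the increment
of `φ ∘ g` as `φ' (g w) * (g v - g u)` with `w ∈ [u, v]`; by uniform continuity `φ' ∘ g` stays
within `ε` of `φ' (g w)` there, so the defect of the chain rule on `[u, v]` is at most `ε` times
the increment of `Λ + Λ̂`. Adding these bounds over a fine partition of `[0, t]` shows that the
total defect is at most `ε (Λ t + Λ̂ t)` for every `ε > 0`.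
-/

open MeasureTheory Set

lemma exists_mem_uIcc_sub_eq_mul {φ φ' : ℝ → ℝ} (hφ : ∀ x, HasDerivAt φ (φ' x) x) (x y : ℝ) :
    ∃ c ∈ uIcc x y, φ y - φ x = φ' c * (y - x) := by
  wlog hxy : x ≤ y generalizing x y
  · obtain ⟨c, hc, hc'⟩ := this y x (le_of_not_ge hxy)
    exact ⟨c, uIcc_comm x y ▸ hc, by linear_combination -hc'⟩
  rcases hxy.eq_or_lt with rfl | hlt
  · exact ⟨x, left_mem_uIcc, by ring⟩
  obtain ⟨c, hc, hc'⟩ := exists_hasDerivAt_eq_slope φ φ' hlt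
    (fun z _ => (hφ z).continuousAt.continuousWithinAt) (fun z _ => hφ z)
  refine ⟨c, uIcc_of_le hxy ▸ Ioo_subset_Icc_self hc, ?_⟩
  rw [hc', div_mul_cancel₀ _ (sub_ne_zero.2 hlt.ne')]

lemma exists_mem_Icc_comp_sub_comp_eq_mul {φ φ' g : ℝ → ℝ} (hφ : ∀ x, HasDerivAt φ (φ' x) x)
    {u v : ℝ} (huv : u ≤ v) (hg : ContinuousOn g (Icc u v)) :
    ∃ w ∈ Icc u v, φ (g v) - φ (g u) = φ' (g w) * (g v - g u) := by
  obtain ⟨c, hc, hc'⟩ := exists_mem_uIcc_sub_eq_mul hφ (g u) (g v)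
  obtain ⟨w, hw, rfl⟩ := intermediate_value_uIcc (uIcc_of_le huv ▸ hg) hc
  exact ⟨w, uIcc_of_le huv ▸ hw, hc'⟩

lemma StieltjesFunction.measureReal_Ioc (F : StieltjesFunction ℝ) {u v : ℝ} (huv : u ≤ v) :
    F.measure.real (Ioc u v) = F v - F u := by
  rw [measureReal_def, F.measure_Ioc, ENNReal.toReal_ofReal (sub_nonneg.2 (F.mono huv))]

lemma StieltjesFunction.abs_setIntegral_Ioc_sub_mul_le (F : StieltjesFunction ℝ) {f : ℝ → ℝ}
    {u v c ε : ℝ} (huv : u ≤ v) (hf : IntegrableOn f (Ioc u v) F.measure)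
    (hfc : ∀ x ∈ Ioc u v, |f x - c| ≤ ε) :
    |∫ x in Ioc u v, f x ∂F.measure - c * (F v - F u)| ≤ ε * (F v - F u) := by
  have hfin : F.measure (Ioc u v) < ⊤ := by simp [F.measure_Ioc]
  have hsub : ∫ x in Ioc u v, f x ∂F.measure - c * (F v - F u)
      = ∫ x in Ioc u v, (f x - c) ∂F.measure := by
    rw [integral_sub hf (integrableOn_const hfin.ne), setIntegral_const, smul_eq_mul,
      F.measureReal_Ioc huv, mul_comm]
  rw [hsub, ← F.measureReal_Ioc huv]
  exact norm_setIntegral_le_of_norm_le_const hfin fun x hx =>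
    (Real.norm_eq_abs _).trans_le (hfc x hx)

lemma abs_sub_le_mul_sub_of_local {P m : ℝ → ℝ} {a b ε δ : ℝ} (hab : a ≤ b) (hδ : 0 < δ)
    (hloc : ∀ u ∈ Icc a b, ∀ v ∈ Icc a b, u ≤ v → v - u < δ → |P v - P u| ≤ ε * (m v - m u)) :
    |P b - P a| ≤ ε * (m b - m a) := by
  have hsteps : ∀ n : ℕ, ∀ u ∈ Icc a b, ∀ v ∈ Icc a b, u ≤ v → v - u ≤ n * (δ / 2) →
      |P v - P u| ≤ ε * (m v - m u) := by
    intro n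
    induction n with
    | zero =>
      intro u _ v _ huv hvu
      obtain rfl : v = u := by push_cast at hvu; linarith
      simp
    | succ n ih =>
      intro u hu v hv huv hvu
      have hwu : max u (v - δ / 2) - u ≤ n * (δ / 2) := by
        rw [← max_sub_sub_right, sub_self]
        push_cast at hvu
        exact max_le (by positivity) (by linarith)
      set w := max u (v - δ / 2)
      have hw : w ∈ Icc a b := ⟨hu.1.trans (le_max_left _ _), max_le hu.2 (by linarith [hv.2])⟩
      have hwv : w ≤ v := max_le huv (by linarith)
      have hleft := ih u hu w hw (le_max_left _ _) hwu
      have hright := hloc w hw v hv hwv (by linarith [le_max_right u (v - δ / 2)])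
      calc |P v - P u| ≤ |P v - P w| + |P w - P u| := abs_sub_le _ _ _
        _ ≤ ε * (m v - m w) + ε * (m w - m u) := add_le_add hright hleft
        _ = ε * (m v - m u) := by ring
  obtain ⟨n, hn⟩ := exists_nat_gt ((b - a) / (δ / 2))
  exact hsteps n a (left_mem_Icc.2 hab) b (right_mem_Icc.2 hab) hab
    ((div_lt_iff₀ (by positivity)).1 hn).le

theorem eq_of_abs_sub_le_mul_sub {P m : ℝ → ℝ} {a b : ℝ} (hab : a ≤ b)
    (hm : MonotoneOn m (Icc a b))
    (h : ∀ ε > 0, ∃ δ > 0, ∀ u ∈ Icc a b, ∀ v ∈ Icc a b, u ≤ v → v - u < δ →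
      |P v - P u| ≤ ε * (m v - m u)) :
    P b = P a := by
  have hM : 0 ≤ m b - m a := sub_nonneg.2 (hm (left_mem_Icc.2 hab) (right_mem_Icc.2 hab) hab)
  refine sub_eq_zero.1 (abs_nonpos_iff.1 (le_of_forall_pos_le_add fun ε hε => ?_))
  obtain ⟨δ, hδ, hloc⟩ := h (ε / (m b - m a + 1)) (by positivity)
  calc |P b - P a| ≤ ε / (m b - m a + 1) * (m b - m a) := abs_sub_le_mul_sub_of_local hab hδ hloc
    _ ≤ 0 + ε := by
      rw [zero_add, div_mul_eq_mul_div, div_le_iff₀ (by positivity)]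
      nlinarith

namespace StieltjesFunction

variable (F G : StieltjesFunction ℝ) {φ φ' : ℝ → ℝ}

lemma abs_comp_sub_sub_integral_sub_integral_le (hF : Continuous fun x => F x)
    (hG : Continuous fun x => G x) (hφ : ∀ x, HasDerivAt φ (φ' x) x) (hφ' : Continuous φ')
    {u v ε : ℝ} (huv : u ≤ v)
    (hosc : ∀ x ∈ Icc u v, ∀ y ∈ Icc u v, |φ' (F x - G x) - φ' (F y - G y)| ≤ ε) :
    |φ (F v - G v) - φ (F u - G u)
        - (∫ x in Ioc u v, φ' (F x - G x) ∂F.measure - ∫ x in Ioc u v, φ' (F x - G x) ∂G.measure)|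
      ≤ ε * ((F v - F u) + (G v - G u)) := by
  obtain ⟨w, hw, hmvt⟩ := exists_mem_Icc_comp_sub_comp_eq_mul (g := fun x => F x - G x) hφ huv
    (hF.sub hG).continuousOn
  have hclose : ∀ x ∈ Ioc u v, |φ' (F x - G x) - φ' (F w - G w)| ≤ ε :=
    fun x hx => hosc x (Ioc_subset_Icc_self hx) w hw
  have hint : ∀ μ : Measure ℝ, [IsLocallyFiniteMeasure μ] →
      IntegrableOn (fun x => φ' (F x - G x)) (Ioc u v) μ :=
    fun μ _ => (hφ'.comp (hF.sub hG)).integrableOn_Ioc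
  have hFint := F.abs_setIntegral_Ioc_sub_mul_le huv (hint _) hclose
  have hGint := G.abs_setIntegral_Ioc_sub_mul_le huv (hint _) hclose
  rw [hmvt]
  calc _ = |(∫ x in Ioc u v, φ' (F x - G x) ∂G.measure - φ' (F w - G w) * (G v - G u))
        - (∫ x in Ioc u v, φ' (F x - G x) ∂F.measure - φ' (F w - G w) * (F v - F u))| := by
        ring_nf
    _ ≤ _ := (abs_sub _ _).trans (by linarith)

theorem comp_sub_sub_eq_integral_sub_integral (hF : Continuous fun x => F x)
    (hG : Continuous fun x => G x) (hφ : ∀ x, HasDerivAt φ (φ' x) x) (hφ' : Continuous φ')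
    {a b : ℝ} (hab : a ≤ b) :
    φ (F b - G b) - φ (F a - G a)
      = ∫ x in Ioc a b, φ' (F x - G x) ∂F.measure - ∫ x in Ioc a b, φ' (F x - G x) ∂G.measure := by
  set f := fun x => φ' (F x - G x)
  have hf : Continuous f := hφ'.comp (hF.sub hG)
  set P := fun t => φ (F t - G t) - (∫ x in a..t, f x ∂F.measure - ∫ x in a..t, f x ∂G.measure)
  have hP : P b = P a := by
    refine eq_of_abs_sub_le_mul_sub (m := fun x => F x + G x) hab
      (fun x _ y _ hxy => add_le_add (F.mono hxy) (G.mono hxy)) fun ε hε => ?_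
    obtain ⟨δ, hδ, hδ'⟩ := Metric.uniformContinuousOn_iff_le.1
      ((isCompact_Icc (a := a) (b := b)).uniformContinuousOn_of_continuous hf.continuousOn) ε hε
    refine ⟨δ, hδ, fun u hu v hv huv hvu => ?_⟩
    have hincr : P v - P u = φ (F v - G v) - φ (F u - G u)
        - (∫ x in Ioc u v, f x ∂F.measure - ∫ x in Ioc u v, f x ∂G.measure) := by
      simp only [P, ← intervalIntegral.integral_of_le huv,
        ← intervalIntegral.integral_interval_sub_left (hf.intervalIntegrable (μ := F.measure) a v)
          (hf.intervalIntegrable a u),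
        ← intervalIntegral.integral_interval_sub_left (hf.intervalIntegrable (μ := G.measure) a v)
          (hf.intervalIntegrable a u)]
      ring
    rw [hincr]
    refine (F.abs_comp_sub_sub_integral_sub_integral_le G hF hG hφ hφ' (ε := ε) huv
      fun x hx y hy => ?_).trans_eq (by ring)
    refine hδ' x ⟨hu.1.trans hx.1, hx.2.trans hv.2⟩ y ⟨hu.1.trans hy.1, hy.2.trans hv.2⟩ ?_
    rw [Real.dist_eq, abs_le]
    constructor <;> linarith [hx.1, hx.2, hy.1, hy.2]
  simp only [P, intervalIntegral.integral_same, sub_zero, intervalIntegral.integral_of_le hab] at hP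
  linarith

end StieltjesFunction

theorem stmt5_general
    (τ : ℝ)
    (Λ Λh : StieltjesFunction ℝ)
    (hΛc : Continuous fun x => Λ x) (hΛhc : Continuous fun x => Λh x)
    (hΛ0 : Λ 0 = 0) (hΛh0 : Λh 0 = 0)
    (S Sh : ℝ → ℝ)
    (hS : ∀ u, S u = Real.exp (-(Λ u)))
    (hSh : ∀ u, Sh u = Real.exp (-(Λh u)))
    (t : ℝ) (ht : t ∈ Set.Icc 0 τ) :
    S t - Sh t
      = Sh t * ((∫ u in Set.Ioc (0:ℝ) t, S u / Sh u ∂Λh.measure)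
          - ∫ u in Set.Ioc (0:ℝ) t, S u / Sh u ∂Λ.measure) := by
  have hratio : ∀ u, S u / Sh u = Real.exp (Λh u - Λ u) := fun u => by
    rw [hS, hSh, ← Real.exp_sub]
    ring_nf
  have hchain := Λh.comp_sub_sub_eq_integral_sub_integral Λ hΛhc hΛc Real.hasDerivAt_exp
    Real.continuous_exp ht.1
  rw [hΛ0, hΛh0, sub_zero, Real.exp_zero] at hchain
  simp only [hratio]
  rw [← hchain, hS, hSh, mul_sub, ← Real.exp_add]
  ring_nf

/-- Duhamel identity: S(t) − Ŝ(t) = Ŝ(t)∫₀^t (S/Ŝ)(dΛ̂ − dΛ). -/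
theorem stmt5
    (τ : ℝ) (hτ : 0 < τ)
    (Λ Λh : StieltjesFunction ℝ)
    (hΛc : Continuous fun x => Λ x) (hΛhc : Continuous fun x => Λh x)
    (hΛ0 : Λ 0 = 0) (hΛh0 : Λh 0 = 0)
    (S Sh : ℝ → ℝ)
    (hS : ∀ u, S u = Real.exp (-(Λ u)))
    (hSh : ∀ u, Sh u = Real.exp (-(Λh u)))
    (t : ℝ) (ht : t ∈ Set.Icc 0 τ) :
    S t - Sh t
      = Sh t * ((∫ u in Set.Ioc (0:ℝ) t, S u / Sh u ∂Λh.measure)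
          - ∫ u in Set.Ioc (0:ℝ) t, S u / Sh u ∂Λ.measure) :=
  stmt5_general τ Λ Λh hΛc hΛhc hΛ0 hΛh0 S Sh hS hSh t ht
end

section
/- Let S, Ŝ : [0,τ] → (0,1] be continuous survival functions of the form S = exp(−Λ), Ŝ = exp(−Λ̂) with Λ, Λ̂ continuous nondecreasing and vanishing at 0. Define RMST(t) = ∫₀^t S(u) du and R̂MST(t) = ∫₀^t Ŝ(u) du. Then R̂MST(τ) − RMST(τ) = −R̂MST(τ) ∫₀^τ (S(t)/Ŝ(t)) (dΛ̂(t) − dΛ(t)) + ∫₀^τ (R̂MST(t) S(t)/Ŝ(t)) (dΛ̂(t) − dΛ(t)). -/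
/-!
Write `D = Λ̂ - Λ` and `E = S / Ŝ = exp D`. The Duhamel equation `S - Ŝ = Ŝ ∫₀^t E dD` is the
chain rule `E t - 1 = ∫₀^t E dD` for the continuous function of bounded variation `D`. It follows
from the power rule `∫₀^t D^n dD = D(t)^(n+1)/(n+1)`, summed over the exponential series by
dominated convergence. The power rule is proved by induction: each step swaps the order of
integration over the triangle `{a < s ≤ t}`, and continuity of `Λ, Λ̂` makes the diagonal null.
Integrating the Duhamel equation against `du` on `(0, τ]` and swapping once more turns
`∫₀^τ Ŝ(s) ∫₀^s E dD ds` into `∫₀^τ (R̂MST τ - R̂MST t) E(t) dD(t)`, which is the identity.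
-/

open MeasureTheory Set

section Triangle

def triangle (a : ℝ) : Set (ℝ × ℝ) := {p | a < p.2 ∧ p.2 ≤ p.1}

variable {μ ν : Measure ℝ} {a c : ℝ} {f g : ℝ → ℝ}

lemma integrable_indicator_triangle [IsLocallyFiniteMeasure μ] [IsLocallyFiniteMeasure ν]
    (hg : Continuous g) (hf : Continuous f) :
    Integrable ((triangle a).indicator fun p => g p.1 * f p.2)
      ((μ.restrict (Ioc a c)).prod (ν.restrict (Ioc a c))) := by
  have hμ : Integrable g (μ.restrict (Ioc a c)) :=
    hg.integrableOn_Icc.mono_set Ioc_subset_Icc_self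
  have hν : Integrable f (ν.restrict (Ioc a c)) :=
    hf.integrableOn_Icc.mono_set Ioc_subset_Icc_self
  exact (hμ.mul_prod hν).indicator
    ((measurableSet_lt measurable_const measurable_snd).inter
      (measurableSet_le measurable_snd measurable_fst))

lemma integral_indicator_triangle_slice_fst {t : ℝ} (ht : t ≤ c) :
    ∫ s, (triangle a).indicator (fun p => g p.1 * f p.2) (t, s)
        ∂ν.restrict (Ioc a c) = g t * ∫ s in Ioc a t, f s ∂ν := by
  have h : (fun s => (triangle a).indicator (fun p => g p.1 * f p.2) (t, s))
      = (Ioc a t).indicator fun s => g t * f s := by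
    ext s; simp [triangle, indicator_apply, mem_Ioc]
  rw [h, integral_indicator measurableSet_Ioc, Measure.restrict_restrict measurableSet_Ioc,
    Ioc_inter_Ioc, max_self, min_eq_left ht, integral_const_mul]

lemma integral_indicator_triangle_slice_snd {s : ℝ} (hs : s ∈ Ioc a c) :
    ∫ t, (triangle a).indicator (fun p => g p.1 * f p.2) (t, s)
        ∂μ.restrict (Ioc a c) = (∫ t in Icc s c, g t ∂μ) * f s := by
  have h : (fun t => (triangle a).indicator (fun p => g p.1 * f p.2) (t, s))
      = (Ici s).indicator fun t => g t * f s := by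
    ext t; simp [triangle, indicator_apply, hs.1]
  have hIcc : Ici s ∩ Ioc a c = Icc s c := by
    ext t
    simp only [mem_inter_iff, mem_Ici, mem_Ioc, mem_Icc]
    exact ⟨fun h => ⟨h.1, h.2.2⟩, fun h => ⟨h.1, hs.1.trans_le h.1, h.2⟩⟩
  rw [h, integral_indicator measurableSet_Ici, Measure.restrict_restrict measurableSet_Ici, hIcc,
    integral_mul_const]

lemma integrableOn_mul_setIntegral_Ioc [IsLocallyFiniteMeasure μ] [IsLocallyFiniteMeasure ν]
    (hg : Continuous g) (hf : Continuous f) :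
    IntegrableOn (fun t => g t * ∫ s in Ioc a t, f s ∂ν) (Ioc a c) μ := by
  refine ((integrable_indicator_triangle (ν := ν) hg hf).integral_prod_left).congr ?_
  filter_upwards [ae_restrict_mem measurableSet_Ioc] with t ht
  exact integral_indicator_triangle_slice_fst ht.2

lemma setIntegral_mul_setIntegral_Ioc_swap [IsLocallyFiniteMeasure μ] [IsLocallyFiniteMeasure ν]
    (hg : Continuous g) (hf : Continuous f) :
    ∫ t in Ioc a c, g t * ∫ s in Ioc a t, f s ∂ν ∂μ
      = ∫ s in Ioc a c, (∫ t in Icc s c, g t ∂μ) * f s ∂ν := by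
  have hswap := integral_integral_swap
    (f := fun t s => (triangle a).indicator (fun p => g p.1 * f p.2) (t, s))
    (integrable_indicator_triangle (μ := μ) (ν := ν) (a := a) (c := c) hg hf)
  calc ∫ t in Ioc a c, g t * ∫ s in Ioc a t, f s ∂ν ∂μ
      = ∫ t in Ioc a c, ∫ s, (triangle a).indicator
          (fun p => g p.1 * f p.2) (t, s) ∂ν.restrict (Ioc a c) ∂μ :=
        setIntegral_congr_fun measurableSet_Ioc fun t ht =>
          (integral_indicator_triangle_slice_fst ht.2).symm
    _ = ∫ s in Ioc a c, ∫ t, (triangle a).indicator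
          (fun p => g p.1 * f p.2) (t, s) ∂μ.restrict (Ioc a c) ∂ν := hswap
    _ = ∫ s in Ioc a c, (∫ t in Icc s c, g t ∂μ) * f s ∂ν :=
        setIntegral_congr_fun measurableSet_Ioc fun s hs =>
          integral_indicator_triangle_slice_snd hs

end Triangle

/-- `∫_{(a,u]} f d(F - G)`. -/
noncomputable def diffIntegral (F G : StieltjesFunction ℝ) (a u : ℝ) (f : ℝ → ℝ) : ℝ :=
  ∫ t in Ioc a u, f t ∂F.measure - ∫ t in Ioc a u, f t ∂G.measure

section DiffIntegral

variable {F G : StieltjesFunction ℝ} {a u : ℝ} {f g : ℝ → ℝ}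

lemma diffIntegral_congr (hfg : EqOn f g (Ioc a u)) :
    diffIntegral F G a u f = diffIntegral F G a u g := by
  unfold diffIntegral
  rw [setIntegral_congr_fun measurableSet_Ioc hfg, setIntegral_congr_fun measurableSet_Ioc hfg]

lemma diffIntegral_const_mul (r : ℝ) :
    diffIntegral F G a u (fun t => r * f t) = r * diffIntegral F G a u f := by
  simp only [diffIntegral, integral_const_mul, mul_sub]

lemma diffIntegral_sub (hf : Continuous f) (hg : Continuous g) :
    diffIntegral F G a u (fun t => f t - g t)
      = diffIntegral F G a u f - diffIntegral F G a u g := by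
  have hIoc {μ : Measure ℝ} [IsLocallyFiniteMeasure μ] {φ : ℝ → ℝ} (hφ : Continuous φ) :
      IntegrableOn φ (Ioc a u) μ :=
    hφ.integrableOn_Icc.mono_set Ioc_subset_Icc_self
  simp only [diffIntegral, integral_sub (hIoc hf) (hIoc hg)]
  ring

lemma diffIntegral_one (hau : a ≤ u) :
    diffIntegral F G a u (fun _ => 1) = (F u - G u) - (F a - G a) := by
  simp only [diffIntegral, setIntegral_const, smul_eq_mul, mul_one, measureReal_def,
    StieltjesFunction.measure_Ioc, ENNReal.toReal_ofReal (sub_nonneg.2 (F.mono hau)),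
    ENNReal.toReal_ofReal (sub_nonneg.2 (G.mono hau))]
  ring

lemma integral_mul_diffIntegral {μ : Measure ℝ} [IsLocallyFiniteMeasure μ] {w : ℝ → ℝ}
    (hw : Continuous w) (hf : Continuous f) :
    ∫ s in Ioc a u, w s * diffIntegral F G a s f ∂μ
      = diffIntegral F G a u fun t => (∫ s in Icc t u, w s ∂μ) * f t := by
  simp only [diffIntegral, mul_sub]
  rw [integral_sub (integrableOn_mul_setIntegral_Ioc hw hf)
    (integrableOn_mul_setIntegral_Ioc hw hf), setIntegral_mul_setIntegral_Ioc_swap hw hf,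
    setIntegral_mul_setIntegral_Ioc_swap hw hf]

lemma StieltjesFunction.measureReal_Icc_of_continuous (hF : Continuous F) {s t : ℝ}
    (hst : s ≤ t) : F.measure.real (Icc s t) = F t - F s := by
  rw [measureReal_def, F.measure_Icc, hF.continuousWithinAt.leftLim_eq,
    ENNReal.toReal_ofReal (sub_nonneg.2 (F.mono hst))]

lemma diffIntegral_diffIntegral (hF : Continuous F) (hG : Continuous G) (hf : Continuous f) :
    diffIntegral F G a u (fun t => diffIntegral F G a t f)
      = diffIntegral F G a u fun s => ((F u - G u) - (F s - G s)) * f s := by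
  have hB {B : StieltjesFunction ℝ} (hB : Continuous B) :
      ∫ t in Ioc a u, diffIntegral F G a t f ∂B.measure
        = diffIntegral F G a u fun s => (B u - B s) * f s := by
    calc ∫ t in Ioc a u, diffIntegral F G a t f ∂B.measure
        = ∫ t in Ioc a u, 1 * diffIntegral F G a t f ∂B.measure := by simp only [one_mul]
      _ = diffIntegral F G a u fun t => (∫ s in Icc t u, 1 ∂B.measure) * f t :=
        integral_mul_diffIntegral continuous_const hf
      _ = diffIntegral F G a u fun s => (B u - B s) * f s :=
        diffIntegral_congr fun s hs => by
          simp [StieltjesFunction.measureReal_Icc_of_continuous hB hs.2]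
  rw [diffIntegral, hB hF, hB hG, ← diffIntegral_sub (f := fun s => (F u - F s) * f s)
    (g := fun s => (G u - G s) * f s) (by fun_prop) (by fun_prop)]
  exact diffIntegral_congr fun s _ => by ring

end DiffIntegral

section Duhamel

variable {F G : StieltjesFunction ℝ} {a : ℝ}

lemma diffIntegral_pow (hF : Continuous F) (hG : Continuous G) (hFG : F a = G a) (n : ℕ)
    {u : ℝ} (hau : a ≤ u) :
    diffIntegral F G a u (fun t => (F t - G t) ^ n) = (F u - G u) ^ (n + 1) / (n + 1) := by
  induction n generalizing u with
  | zero => simp [diffIntegral_one hau, hFG]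
  | succ n ih =>
    have hDn (k : ℕ) : Continuous fun t => (F t - G t) ^ k := by fun_prop
    have hpow : EqOn (fun t => (F t - G t) ^ (n + 1))
        (fun t => (n + 1) * diffIntegral F G a t fun s => (F s - G s) ^ n) (Ioc a u) :=
      fun t ht => by simp only [ih ht.1.le]; field_simp
    have hrec : diffIntegral F G a u (fun t => (F t - G t) ^ (n + 1))
        = (F u - G u) ^ (n + 2)
          - (n + 1) * diffIntegral F G a u (fun t => (F t - G t) ^ (n + 1)) :=
      calc _ = (n + 1) * diffIntegral F G a u (fun t => diffIntegral F G a t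
            fun s => (F s - G s) ^ n) := by rw [diffIntegral_congr hpow, diffIntegral_const_mul]
        _ = (n + 1) * diffIntegral F G a u
            (fun s => (F u - G u) * (F s - G s) ^ n - (F s - G s) ^ (n + 1)) := by
          rw [diffIntegral_diffIntegral hF hG (hDn n)]
          exact congrArg _ (diffIntegral_congr fun s _ => by ring)
        _ = _ := by
          rw [diffIntegral_sub (f := fun s => (F u - G u) * (F s - G s) ^ n) (by fun_prop)
            (hDn _), diffIntegral_const_mul, ih hau]
          field_simp
          ring
    rw [eq_div_iff (by positivity)]
    push_cast
    linear_combination hrec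

lemma hasSum_setIntegral_pow_div_factorial {μ : Measure ℝ} [IsLocallyFiniteMeasure μ]
    {φ : ℝ → ℝ} (hφ : Continuous φ) (u : ℝ) :
    HasSum (fun n => ∫ t in Ioc a u, φ t ^ n / n.factorial ∂μ)
      (∫ t in Ioc a u, Real.exp (φ t) ∂μ) := by
  have : IsFiniteMeasure (μ.restrict (Ioc a u)) :=
    isFiniteMeasure_restrict.2 measure_Ioc_lt_top.ne
  obtain ⟨C, hC⟩ := isCompact_Icc.exists_bound_of_continuousOn (hφ.continuousOn (s := Icc a u))
  refine hasSum_integral_of_dominated_convergence (fun n _ => C ^ n / n.factorial)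
    (fun n => by fun_prop) (fun n => ?_) (.of_forall fun _ => Real.summable_pow_div_factorial C)
    (integrable_const _) (.of_forall fun t => ?_)
  · filter_upwards [ae_restrict_mem measurableSet_Ioc] with t ht
    rw [norm_div, norm_pow, RCLike.norm_natCast]
    gcongr
    exact hC t (Ioc_subset_Icc_self ht)
  · rw [Real.exp_eq_exp_ℝ]
    exact NormedSpace.expSeries_div_hasSum_exp (φ t)

lemma diffIntegral_exp (hF : Continuous F) (hG : Continuous G) (hFG : F a = G a) {u : ℝ}
    (hau : a ≤ u) :
    diffIntegral F G a u (fun t => Real.exp (F t - G t)) = Real.exp (F u - G u) - 1 := by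
  have hD : Continuous fun t => F t - G t := hF.sub hG
  have hseries := (hasSum_setIntegral_pow_div_factorial (μ := F.measure) (a := a) hD u).sub
    (hasSum_setIntegral_pow_div_factorial (μ := G.measure) (a := a) hD u)
  have hterm (n : ℕ) : ∫ t in Ioc a u, (F t - G t) ^ n / n.factorial ∂F.measure
      - ∫ t in Ioc a u, (F t - G t) ^ n / n.factorial ∂G.measure
        = (F u - G u) ^ (n + 1) / (n + 1).factorial := by
    rw [integral_div, integral_div, ← sub_div]
    change diffIntegral F G a u (fun t => (F t - G t) ^ n) / _ = _
    rw [diffIntegral_pow hF hG hFG n hau, Nat.factorial_succ]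
    push_cast
    field_simp
  simp only [hterm] at hseries
  have hexp := (hasSum_nat_add_iff' 1).2
    (Real.exp_eq_exp_ℝ ▸ NormedSpace.expSeries_div_hasSum_exp (F u - G u))
  rw [Finset.sum_range_one, pow_zero, Nat.factorial_zero, Nat.cast_one, div_one] at hexp
  exact hseries.unique hexp

end Duhamel

/-- RMST difference decomposition via the Duhamel equation. -/
theorem stmt6
    (τ : ℝ) (hτ : 0 < τ)
    (Λ Λh : StieltjesFunction ℝ)
    (hΛc : Continuous fun x => Λ x) (hΛhc : Continuous fun x => Λh x)
    (hΛ0 : Λ 0 = 0) (hΛh0 : Λh 0 = 0)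
    (S Sh : ℝ → ℝ)
    (hS : ∀ u, S u = Real.exp (-(Λ u)))
    (hSh : ∀ u, Sh u = Real.exp (-(Λh u)))
    (RMST RMSTh : ℝ → ℝ)
    (hRMST : ∀ s, RMST s = ∫ u in (0:ℝ)..s, S u)
    (hRMSTh : ∀ s, RMSTh s = ∫ u in (0:ℝ)..s, Sh u) :
    RMSTh τ - RMST τ
      = -(RMSTh τ) * ((∫ t in Set.Ioc (0:ℝ) τ, S t / Sh t ∂Λh.measure)
          - ∫ t in Set.Ioc (0:ℝ) τ, S t / Sh t ∂Λ.measure)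
        + ((∫ t in Set.Ioc (0:ℝ) τ, RMSTh t * S t / Sh t ∂Λh.measure)
          - ∫ t in Set.Ioc (0:ℝ) τ, RMSTh t * S t / Sh t ∂Λ.measure) := by
  have hSc : Continuous S := by rw [funext hS]; fun_prop
  have hShc : Continuous Sh := by rw [funext hSh]; fun_prop
  have hRMSThc : Continuous RMSTh := by
    rw [funext hRMSTh]
    exact intervalIntegral.continuous_primitive (fun a b => hShc.intervalIntegrable a b) 0
  have hE : Continuous fun t => Real.exp (Λh t - Λ t) := by fun_prop
  have hratio (t : ℝ) : S t / Sh t = Real.exp (Λh t - Λ t) := by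
    rw [hS, hSh, ← Real.exp_sub]
    ring_nf
  have hduhamel {s : ℝ} (hs : 0 ≤ s) :
      S s - Sh s = Sh s * diffIntegral Λh Λ 0 s fun t => Real.exp (Λh t - Λ t) := by
    rw [diffIntegral_exp hΛhc hΛc (hΛh0.trans hΛ0.symm) hs, ← hratio, mul_sub,
      mul_div_cancel₀ _ (by rw [hSh]; positivity), mul_one]
  have hRMSTh_sub {t : ℝ} (ht : t ≤ τ) : ∫ s in Icc t τ, Sh s = RMSTh τ - RMSTh t := by
    rw [integral_Icc_eq_integral_Ioc, ← intervalIntegral.integral_of_le ht, hRMSTh, hRMSTh,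
      intervalIntegral.integral_interval_sub_left (hShc.intervalIntegrable _ _)
        (hShc.intervalIntegrable _ _)]
  calc RMSTh τ - RMST τ
      = -∫ s in Ioc 0 τ, Sh s * diffIntegral Λh Λ 0 s fun t => Real.exp (Λh t - Λ t) := by
        rw [hRMSTh, hRMST, ← intervalIntegral.integral_sub (hShc.intervalIntegrable _ _)
          (hSc.intervalIntegrable _ _), intervalIntegral.integral_of_le hτ.le, ← integral_neg]
        exact setIntegral_congr_fun measurableSet_Ioc fun s hs => by
          rw [← hduhamel hs.1.le, neg_sub]
    _ = -diffIntegral Λh Λ 0 τ fun t => RMSTh τ * Real.exp (Λh t - Λ t)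
          - RMSTh t * Real.exp (Λh t - Λ t) := by
        rw [integral_mul_diffIntegral hShc hE]
        exact congrArg _ (diffIntegral_congr fun t ht => by rw [hRMSTh_sub ht.2, sub_mul])
    _ = _ := by
        rw [diffIntegral_sub (by fun_prop) (by fun_prop), diffIntegral_const_mul]
        simp only [diffIntegral, hratio, mul_div_assoc]
        ring
end

section
/- Let Λ, Λ̂, Λ_j, Λ̂_j be continuous nondecreasing functions on [0,τ] vanishing at 0, with dΛ_j ≤ dΛ and dΛ̂_j ≤ dΛ̂; set S = exp(−Λ), Ŝ = exp(−Λ̂), F_j(t) = ∫₀^t S dΛ_j, F̂_j(t) = ∫₀^t Ŝ dΛ̂_j. Then for every t ∈ [0,τ]: F̂_j(t) − F_j(t) = −F̂_j(t) ∫₀^t (S(u)/Ŝ(u))(dΛ̂(u) − dΛ(u)) + ∫₀^t (F̂_j(u) S(u)/Ŝ(u))(dΛ̂(u) − dΛ(u)) + ∫₀^t S(u)(dΛ̂_j(u) − dΛ_j(u)). -/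
/-!
Put `H = S / Ŝ = exp (Λ̂ - Λ)`. For a continuous Stieltjes function `f`, the image of `df` on
`(a, b]` under `f` is Lebesgue measure on `(f a, f b]`, so `∫ exp (± f) df` is elementary, and
partial integration of the product `exp Λ̂ · exp (-Λ)` gives the Duhamel identity
`H u - 1 = ∫₀^u H d(Λ̂ - Λ)`, i.e. `S = Ŝ (1 + ∫₀^u H dΛ̂ - ∫₀^u H dΛ)`. Integrating this against
`dΛ̂_j` and integrating by parts once more, against `F̂_j = ∫ Ŝ dΛ̂_j`, moves `F̂_j` inside the
`d(Λ̂ - Λ)` integrals.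
-/

open MeasureTheory Set Real

section

variable {μ ν : Measure ℝ} {p q : ℝ → ℝ}

theorem setIntegral_mul_primitive_swap {a b : ℝ} [SFinite μ] [SFinite ν]
    (hp : IntegrableOn p (Ioc a b) μ) (hq : IntegrableOn q (Ioc a b) ν) :
    ∫ u in Ioc a b, p u * ∫ v in Ioc a u, q v ∂ν ∂μ
      = ∫ v in Ioc a b, q v * ∫ u in Icc v b, p u ∂μ ∂ν := by
  set T := {z : ℝ × ℝ | z.2 ≤ z.1}
  have hT : MeasurableSet T := measurableSet_le measurable_snd measurable_fst
  have hswap := integral_integral_swap (f := fun u v => T.indicator (fun z => p z.1 * q z.2) (u, v))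
    ((hp.mul_prod hq).indicator hT)
  convert hswap using 1
  · refine setIntegral_congr_fun measurableSet_Ioc fun u hu => ?_
    change _ = ∫ v in Ioc a b, (Iic u).indicator (fun v => p u * q v) v ∂ν
    rw [integral_indicator measurableSet_Iic, Measure.restrict_restrict measurableSet_Iic,
      Iic_inter_Ioc_of_le hu.2, integral_const_mul]
  · refine setIntegral_congr_fun measurableSet_Ioc fun v hv => ?_
    change _ = ∫ u in Ioc a b, (Ici v).indicator (fun u => p u * q v) u ∂μ
    have hset : Ici v ∩ Ioc a b = Icc v b := by
      ext u
      simp only [mem_inter_iff, mem_Ici, mem_Ioc, mem_Icc]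
      exact ⟨fun h => ⟨h.1, h.2.2⟩, fun h => ⟨h.1, hv.1.trans_le h.1, h.2⟩⟩
    rw [integral_indicator measurableSet_Ici, Measure.restrict_restrict measurableSet_Ici, hset,
      integral_mul_const, mul_comm]

variable [IsLocallyFiniteMeasure μ] [NullSingletonClass μ]

theorem continuous_primitive_Ioc (hp : Continuous p) (a : ℝ) :
    Continuous fun x => ∫ u in Ioc a x, p u ∂μ := by
  have hprim : (fun x => ∫ u in Ioc a x, p u ∂μ) = fun x => ∫ u in a..max a x, p u ∂μ := by
    ext x
    rw [intervalIntegral.integral_of_le (le_max_left a x)]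
    rcases le_total x a with hxa | hax
    · rw [max_eq_left hxa, Ioc_self, Ioc_eq_empty_of_le hxa]
    · rw [max_eq_right hax]
  rw [hprim]
  exact (intervalIntegral.continuous_primitive (fun _ _ => hp.intervalIntegrable _ _) a).comp
    (continuous_const.max continuous_id)

theorem setIntegral_mul_primitive_add [IsLocallyFiniteMeasure ν] (hp : Continuous p)
    (hq : Continuous q) (a b : ℝ) :
    ∫ u in Ioc a b, p u * (∫ v in Ioc a u, q v ∂ν) ∂μ
        + ∫ v in Ioc a b, q v * (∫ u in Ioc a v, p u ∂μ) ∂ν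
      = (∫ u in Ioc a b, p u ∂μ) * ∫ v in Ioc a b, q v ∂ν := by
  set P := fun x => ∫ u in Ioc a x, p u ∂μ
  have hP : Continuous P := continuous_primitive_Ioc hp a
  have hsplit : ∀ v ∈ Ioc a b, ∫ u in Icc v b, p u ∂μ = P b - P v := fun v hv => by
    rw [integral_Icc_eq_integral_Ioc, eq_sub_iff_add_eq', ← setIntegral_union
      (Ioc_disjoint_Ioc_of_le le_rfl) measurableSet_Ioc hp.integrableOn_Ioc hp.integrableOn_Ioc,
      Ioc_union_Ioc_eq_Ioc hv.1.le hv.2]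
  rw [setIntegral_mul_primitive_swap hp.integrableOn_Ioc hq.integrableOn_Ioc,
    setIntegral_congr_fun measurableSet_Ioc fun v hv => by rw [hsplit v hv],
    ← integral_add (f := fun v => q v * (P b - P v)) (g := fun v => q v * P v)
      (hq.mul (continuous_const.sub hP)).integrableOn_Ioc (hq.mul hP).integrableOn_Ioc]
  simp only [← mul_add, sub_add_cancel]
  rw [integral_mul_const, mul_comm]

theorem setIntegral_mul_primitive_sub {ν₁ ν₂ : Measure ℝ} [IsLocallyFiniteMeasure ν₁]
    [IsLocallyFiniteMeasure ν₂] [NullSingletonClass ν₁] [NullSingletonClass ν₂]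
    (hp : Continuous p) (hq : Continuous q) (a b : ℝ) :
    ∫ u in Ioc a b, p u * (∫ v in Ioc a u, q v ∂ν₁ - ∫ v in Ioc a u, q v ∂ν₂) ∂μ
      = (∫ u in Ioc a b, p u ∂μ) * (∫ v in Ioc a b, q v ∂ν₁ - ∫ v in Ioc a b, q v ∂ν₂)
        - (∫ v in Ioc a b, q v * (∫ u in Ioc a v, p u ∂μ) ∂ν₁
          - ∫ v in Ioc a b, q v * (∫ u in Ioc a v, p u ∂μ) ∂ν₂) := by
  simp only [mul_sub]
  rw [integral_sub, ← setIntegral_mul_primitive_add (ν := ν₁) hp hq,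
    ← setIntegral_mul_primitive_add (ν := ν₂) hp hq]
  · ring
  all_goals exact (hp.mul (continuous_primitive_Ioc hq a)).integrableOn_Ioc

end

namespace StieltjesFunction

variable (f : StieltjesFunction ℝ) {a b : ℝ}

theorem nullSingletonClass_measure_of_continuous (hf : Continuous f) :
    NullSingletonClass f.measure :=
  ⟨fun x => by
    rw [f.measure_singleton, hf.continuousAt.continuousWithinAt.leftLim_eq, sub_self,
      ENNReal.ofReal_zero]⟩

theorem exists_preimage_Iic_inter_Ioc_eq_Ioc (hf : Continuous f) {c : ℝ} (hab : a ≤ b)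
    (hc : f a ≤ c) : ∃ x ∈ Icc a b, f x = min c (f b) ∧ f ⁻¹' Iic c ∩ Ioc a b = Ioc a x := by
  set K := Icc a b ∩ f ⁻¹' Iic c
  have hK : IsCompact K := isCompact_Icc.inter_right (isClosed_le hf continuous_const)
  have hle : ∀ y ∈ K, y ≤ sSup K := fun y hy => le_csSup hK.bddAbove hy
  obtain ⟨hx, hxc⟩ : sSup K ∈ K := hK.sSup_mem ⟨a, left_mem_Icc.2 hab, hc⟩
  obtain ⟨z, hz, hfz⟩ := intermediate_value_Icc hab hf.continuousOn
    ⟨le_min hc (f.mono hab), min_le_right c (f b)⟩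
  refine ⟨sSup K, hx, le_antisymm (le_min hxc (f.mono hx.2)) ?_, ?_⟩
  · exact hfz ▸ f.mono (hle z ⟨hz, hfz.trans_le (min_le_left c (f b))⟩)
  · ext y
    exact ⟨fun ⟨hyc, hy⟩ => ⟨hy.1, hle y ⟨Ioc_subset_Icc_self hy, hyc⟩⟩,
      fun ⟨hay, hyx⟩ => ⟨(f.mono hyx).trans hxc, hay, hyx.trans hx.2⟩⟩

theorem map_restrict_Ioc (hf : Continuous f) :
    (f.measure.restrict (Ioc a b)).map f = volume.restrict (Ioc (f a) (f b)) := by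
  rcases lt_or_ge b a with hba | hab
  · simp [Ioc_eq_empty_of_le hba.le, Ioc_eq_empty_of_le (f.mono hba.le)]
  have : IsFiniteMeasure (f.measure.restrict (Ioc a b)) :=
    isFiniteMeasure_restrict.2 measure_Ioc_lt_top.ne
  refine Measure.ext_of_Iic _ _ fun c => ?_
  rw [Measure.map_apply f.mono.measurable measurableSet_Iic,
    Measure.restrict_apply (f.mono.measurable measurableSet_Iic),
    Measure.restrict_apply measurableSet_Iic, inter_comm (Iic c), Ioc_inter_Iic, Real.volume_Ioc]
  rcases lt_or_ge c (f a) with hc | hc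
  · rw [ENNReal.ofReal_of_nonpos (by linarith [min_le_right (f b) c])]
    refine measure_mono_null (fun y hy => ?_) measure_empty
    exact (hc.trans_le (f.mono hy.2.1.le)).not_ge hy.1
  · obtain ⟨x, -, hfx, hset⟩ := f.exists_preimage_Iic_inter_Ioc_eq_Ioc hf hab hc
    rw [hset, f.measure_Ioc, hfx, min_comm]

theorem integral_comp_Ioc {E : Type*} [NormedAddCommGroup E] [NormedSpace ℝ E]
    (hf : Continuous f) {g : ℝ → E}
    (hg : AEStronglyMeasurable g (volume.restrict (Ioc (f a) (f b)))) :
    ∫ x in Ioc a b, g (f x) ∂f.measure = ∫ y in Ioc (f a) (f b), g y := by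
  rw [← integral_map f.mono.measurable.aemeasurable (by rwa [f.map_restrict_Ioc hf]),
    f.map_restrict_Ioc hf]

theorem integral_exp_Ioc (hf : Continuous f) (hab : a ≤ b) :
    ∫ x in Ioc a b, exp (f x) ∂f.measure = exp (f b) - exp (f a) := by
  rw [f.integral_comp_Ioc hf continuous_exp.aestronglyMeasurable,
    ← intervalIntegral.integral_of_le (f.mono hab), integral_exp]

theorem integral_exp_neg_Ioc (hf : Continuous f) (hab : a ≤ b) :
    ∫ x in Ioc a b, exp (-f x) ∂f.measure = exp (-f a) - exp (-f b) := by
  rw [f.integral_comp_Ioc hf (g := fun y => exp (-y)) (by fun_prop),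
    ← intervalIntegral.integral_of_le (f.mono hab),
    intervalIntegral.integral_comp_neg (fun y => exp y),
    integral_exp]

theorem exp_sub_sub_exp_sub_eq (g : StieltjesFunction ℝ) (hf : Continuous f) (hg : Continuous g)
    (hab : a ≤ b) :
    exp (f b - g b) - exp (f a - g a)
      = ∫ x in Ioc a b, exp (f x - g x) ∂f.measure
        - ∫ x in Ioc a b, exp (f x - g x) ∂g.measure := by
  have := f.nullSingletonClass_measure_of_continuous hf
  have hexp : ∀ x, exp (f x - g x) = exp (f x) * exp (-g x) := fun x => by
    rw [sub_eq_add_neg, exp_add]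
  have hH : Continuous fun x => exp (f x - g x) := (hf.sub hg).rexp
  have hibp := setIntegral_mul_primitive_add (μ := f.measure) (ν := g.measure)
    (p := fun x => exp (f x)) (q := fun x => exp (-g x)) hf.rexp hg.neg.rexp a b
  have hf_part : ∫ x in Ioc a b, exp (f x) * ∫ v in Ioc a x, exp (-g v) ∂g.measure ∂f.measure
      = exp (-g a) * (exp (f b) - exp (f a)) - ∫ x in Ioc a b, exp (f x - g x) ∂f.measure := by
    calc _ = ∫ x in Ioc a b, (exp (-g a) * exp (f x) - exp (f x - g x)) ∂f.measure :=
          setIntegral_congr_fun measurableSet_Ioc fun x hx => by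
            rw [g.integral_exp_neg_Ioc hg hx.1.le, hexp]; ring
      _ = _ := by
        rw [integral_sub (f := fun x => exp (-g a) * exp (f x))
          (continuous_const.mul hf.rexp).integrableOn_Ioc hH.integrableOn_Ioc,
          integral_const_mul, f.integral_exp_Ioc hf hab]
  have hg_part : ∫ x in Ioc a b, exp (-g x) * ∫ v in Ioc a x, exp (f v) ∂f.measure ∂g.measure
      = ∫ x in Ioc a b, exp (f x - g x) ∂g.measure - exp (f a) * (exp (-g a) - exp (-g b)) := by
    calc _ = ∫ x in Ioc a b, (exp (f x - g x) - exp (f a) * exp (-g x)) ∂g.measure :=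
          setIntegral_congr_fun measurableSet_Ioc fun x hx => by
            rw [f.integral_exp_Ioc hf hx.1.le, hexp]; ring
      _ = _ := by
        rw [integral_sub (g := fun x => exp (f a) * exp (-g x)) hH.integrableOn_Ioc
          (continuous_const.mul hg.neg.rexp).integrableOn_Ioc, integral_const_mul,
          g.integral_exp_neg_Ioc hg hab]
  rw [hf_part, hg_part, f.integral_exp_Ioc hf hab, g.integral_exp_neg_Ioc hg hab] at hibp
  rw [hexp, hexp]
  linear_combination hibp

end StieltjesFunction

theorem stmt10_general
    (Λ Λh Λj Λjh : StieltjesFunction ℝ)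
    (hΛc : Continuous fun x => Λ x) (hΛhc : Continuous fun x => Λh x)
    (hΛjhc : Continuous fun x => Λjh x)
    (hΛ0 : Λ 0 = 0) (hΛh0 : Λh 0 = 0)
    (S Sh : ℝ → ℝ)
    (hS : ∀ u, S u = Real.exp (-(Λ u)))
    (hSh : ∀ u, Sh u = Real.exp (-(Λh u)))
    (F Fh : ℝ → ℝ)
    (hF : ∀ s, F s = ∫ u in Set.Ioc (0:ℝ) s, S u ∂Λj.measure)
    (hFh : ∀ s, Fh s = ∫ u in Set.Ioc (0:ℝ) s, Sh u ∂Λjh.measure)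
    (t : ℝ) :
    Fh t - F t
      = -(Fh t) * ((∫ u in Set.Ioc (0:ℝ) t, S u / Sh u ∂Λh.measure)
            - ∫ u in Set.Ioc (0:ℝ) t, S u / Sh u ∂Λ.measure)
        + ((∫ u in Set.Ioc (0:ℝ) t, Fh u * S u / Sh u ∂Λh.measure)
            - ∫ u in Set.Ioc (0:ℝ) t, Fh u * S u / Sh u ∂Λ.measure)
        + ((∫ u in Set.Ioc (0:ℝ) t, S u ∂Λjh.measure)
            - ∫ u in Set.Ioc (0:ℝ) t, S u ∂Λj.measure) := by
  have := Λ.nullSingletonClass_measure_of_continuous hΛc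
  have := Λh.nullSingletonClass_measure_of_continuous hΛhc
  have := Λjh.nullSingletonClass_measure_of_continuous hΛjhc
  set H := fun u => exp (Λh u - Λ u)
  have hH : Continuous H := (hΛhc.sub hΛc).rexp
  have hShc : Continuous Sh := funext hSh ▸ hΛhc.neg.rexp
  have hSH : ∀ u, S u = Sh u * H u := fun u => by
    rw [hS, hSh, ← exp_add]
    ring_nf
  have hdiv : ∀ u, S u / Sh u = H u := fun u => by
    rw [hSH, mul_div_cancel_left₀ _ (hSh u ▸ (exp_pos _).ne')]
  have hduhamel : ∀ u ∈ Ioc 0 t, S u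
      = Sh u + Sh u * (∫ v in Ioc 0 u, H v ∂Λh.measure - ∫ v in Ioc 0 u, H v ∂Λ.measure) :=
    fun u hu => by
      rw [← Λh.exp_sub_sub_exp_sub_eq Λ hΛhc hΛc hu.1.le, hΛ0, hΛh0, sub_zero, exp_zero, mul_sub,
        mul_one, add_sub_cancel, hSH]
  have hsplit : ∫ u in Ioc 0 t, S u ∂Λjh.measure = Fh t + ∫ u in Ioc 0 t,
      Sh u * (∫ v in Ioc 0 u, H v ∂Λh.measure - ∫ v in Ioc 0 u, H v ∂Λ.measure) ∂Λjh.measure := by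
    rw [setIntegral_congr_fun measurableSet_Ioc hduhamel, integral_add, hFh]
    exacts [hShc.integrableOn_Ioc, (hShc.mul ((continuous_primitive_Ioc hH 0).sub
      (continuous_primitive_Ioc hH 0))).integrableOn_Ioc]
  rw [setIntegral_mul_primitive_sub hShc hH] at hsplit
  simp only [← hFh] at hsplit
  have hFdiv : ∀ u, Fh u * S u / Sh u = H u * Fh u := fun u => by
    rw [mul_div_assoc, hdiv, mul_comm]
  simp only [hdiv, hFdiv, hF t]
  linear_combination -hsplit

/-- Cumulative incidence difference decomposition. -/
theorem stmt10
    (τ : ℝ) (hτ : 0 < τ)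
    (Λ Λh Λj Λjh : StieltjesFunction ℝ)
    (hΛc : Continuous fun x => Λ x) (hΛhc : Continuous fun x => Λh x)
    (hΛjc : Continuous fun x => Λj x) (hΛjhc : Continuous fun x => Λjh x)
    (hΛ0 : Λ 0 = 0) (hΛh0 : Λh 0 = 0) (hΛj0 : Λj 0 = 0) (hΛjh0 : Λjh 0 = 0)
    (hle : Λj.measure ≤ Λ.measure) (hleh : Λjh.measure ≤ Λh.measure)
    (S Sh : ℝ → ℝ)
    (hS : ∀ u, S u = Real.exp (-(Λ u)))
    (hSh : ∀ u, Sh u = Real.exp (-(Λh u)))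
    (F Fh : ℝ → ℝ)
    (hF : ∀ s, F s = ∫ u in Set.Ioc (0:ℝ) s, S u ∂Λj.measure)
    (hFh : ∀ s, Fh s = ∫ u in Set.Ioc (0:ℝ) s, Sh u ∂Λjh.measure)
    (t : ℝ) (ht : t ∈ Set.Icc 0 τ) :
    Fh t - F t
      = -(Fh t) * ((∫ u in Set.Ioc (0:ℝ) t, S u / Sh u ∂Λh.measure)
            - ∫ u in Set.Ioc (0:ℝ) t, S u / Sh u ∂Λ.measure)
        + ((∫ u in Set.Ioc (0:ℝ) t, Fh u * S u / Sh u ∂Λh.measure)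
            - ∫ u in Set.Ioc (0:ℝ) t, Fh u * S u / Sh u ∂Λ.measure)
        + ((∫ u in Set.Ioc (0:ℝ) t, S u ∂Λjh.measure)
            - ∫ u in Set.Ioc (0:ℝ) t, S u ∂Λj.measure) :=
  stmt10_general Λ Λh Λj Λjh hΛc hΛhc hΛjhc hΛ0 hΛh0 S Sh hS hSh F Fh hF hFh t
end

section
/- Let p be a probability density on a measurable space with respect to a measure μ, and let π : X → (0,1) be measurable. Among all measurable tilting functions h : X → [0,∞) with ∫ h p dμ > 0, the ratio R(h) = ∫ (h(x)² / (π(x)(1−π(x)))) p(x) μ(dx) / ( ∫ h(x) p(x) μ(dx) )² is minimized when h(x) = c · π(x)(1 − π(x)) for some constant c > 0, and the minimum value is ( ∫ π(x)(1−π(x)) p(x) μ(dx) )^{−1}. -/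
open MeasureTheory

theorem sq_integral_mul_le_integral_sq_div_mul_integral
    {X : Type*} [MeasurableSpace X] {μ : Measure X} {f g w : X → ℝ}
    (hw : ∀ x, 0 ≤ w x) (hg : ∀ x, 0 < g x)
    (hfw : Integrable (fun x => f x * w x) μ)
    (hf2w : Integrable (fun x => f x ^ 2 / g x * w x) μ)
    (hgw : Integrable (fun x => g x * w x) μ) :
    (∫ x, f x * w x ∂μ) ^ 2 ≤ (∫ x, f x ^ 2 / g x * w x ∂μ) * ∫ x, g x * w x ∂μ := by
  set A := ∫ x, f x ^ 2 / g x * w x ∂μ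
  set B := ∫ x, f x * w x ∂μ
  set C := ∫ x, g x * w x ∂μ
  -- `∫ (f - t g)² / g · w ≥ 0` is a quadratic in `t` with nonpositive discriminant.
  have hquad : ∀ t : ℝ, 0 ≤ C * (t * t) + (-2 * B) * t + A := fun t => by
    have hexpand : (fun x => (f x - t * g x) ^ 2 / g x * w x) =
        fun x => f x ^ 2 / g x * w x - (2 * t) * (f x * w x) + t ^ 2 * (g x * w x) := by
      funext x
      field_simp [(hg x).ne']
      ring
    calc 0 ≤ ∫ x, (f x - t * g x) ^ 2 / g x * w x ∂μ :=
          integral_nonneg fun x => mul_nonneg (div_nonneg (sq_nonneg _) (hg x).le) (hw x)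
      _ = A - 2 * t * B + t ^ 2 * C := by
          have hdiff : Integrable (fun x => f x ^ 2 / g x * w x - 2 * t * (f x * w x)) μ :=
            hf2w.sub (hfw.const_mul _)
          rw [hexpand, integral_add hdiff (hgw.const_mul _), integral_sub hf2w (hfw.const_mul _),
            integral_const_mul, integral_const_mul]
      _ = C * (t * t) + (-2 * B) * t + A := by ring
  have hdisc := discrim_le_zero hquad
  rw [discrim] at hdisc
  linarith

theorem stmt11_general
    {X : Type*} [MeasurableSpace X] (μ : Measure X)
    (p : X → ℝ) (hp0 : ∀ x, 0 ≤ p x)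
    (π : X → ℝ) (hπ : ∀ x, π x ∈ Set.Ioo (0:ℝ) 1)
    (R : (X → ℝ) → ℝ)
    (hR : ∀ h : X → ℝ,
      R h = (∫ x, (h x) ^ 2 / (π x * (1 - π x)) * p x ∂μ)
              / (∫ x, h x * p x ∂μ) ^ 2)
    (hIπ : Integrable (fun x => π x * (1 - π x) * p x) μ)
    (hpos : 0 < ∫ x, π x * (1 - π x) * p x ∂μ) :
    (∀ h : X → ℝ, Measurable h → (∀ x, 0 ≤ h x) →
        Integrable (fun x => h x * p x) μ →
        Integrable (fun x => (h x) ^ 2 / (π x * (1 - π x)) * p x) μ →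
        0 < ∫ x, h x * p x ∂μ →
        (∫ x, π x * (1 - π x) * p x ∂μ)⁻¹ ≤ R h)
    ∧ (∀ c : ℝ, 0 < c →
        R (fun x => c * (π x * (1 - π x)))
          = (∫ x, π x * (1 - π x) * p x ∂μ)⁻¹) := by
  have hq : ∀ x, 0 < π x * (1 - π x) := fun x =>
    mul_pos (hπ x).1 (sub_pos.mpr (hπ x).2)
  set C := ∫ x, π x * (1 - π x) * p x ∂μ
  refine ⟨fun h _ _ hhp hh2p hB => ?_, fun c hc => ?_⟩
  · have hcs := sq_integral_mul_le_integral_sq_div_mul_integral hp0 hq hhp hh2p hIπ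
    rw [hR, le_div_iff₀ (pow_pos hB 2), inv_mul_le_iff₀ hpos]
    linarith
  · have hnum : ∫ x, (c * (π x * (1 - π x))) ^ 2 / (π x * (1 - π x)) * p x ∂μ = c ^ 2 * C := by
      rw [← integral_const_mul]
      refine integral_congr_ae (Filter.Eventually.of_forall fun x => ?_)
      field_simp [(hq x).ne']
    have hden : ∫ x, c * (π x * (1 - π x)) * p x ∂μ = c * C := by
      rw [← integral_const_mul]
      simp only [mul_assoc]
    rw [hR, hnum, hden]
    field_simp

/-- Overlap weights minimize the homoscedastic asymptotic-variance ratio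
    R(h) = ∫ h²/(π(1−π)) p dμ / (∫ h p dμ)², with minimum
    (∫ π(1−π) p dμ)⁻¹ attained at h ∝ π(1−π). -/
theorem stmt11
    {X : Type*} [MeasurableSpace X] (μ : Measure X)
    (p : X → ℝ) (hpm : Measurable p) (hp0 : ∀ x, 0 ≤ p x)
    (hp1 : ∫ x, p x ∂μ = 1)
    (π : X → ℝ) (hπm : Measurable π) (hπ : ∀ x, π x ∈ Set.Ioo (0:ℝ) 1)
    (R : (X → ℝ) → ℝ)
    (hR : ∀ h : X → ℝ,
      R h = (∫ x, (h x) ^ 2 / (π x * (1 - π x)) * p x ∂μ)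
              / (∫ x, h x * p x ∂μ) ^ 2)
    (hIπ : Integrable (fun x => π x * (1 - π x) * p x) μ)
    (hIπ2 : Integrable (fun x => (π x * (1 - π x)) ^ 2 / (π x * (1 - π x)) * p x) μ)
    (hpos : 0 < ∫ x, π x * (1 - π x) * p x ∂μ) :
    (∀ h : X → ℝ, Measurable h → (∀ x, 0 ≤ h x) →
        Integrable (fun x => h x * p x) μ →
        Integrable (fun x => (h x) ^ 2 / (π x * (1 - π x)) * p x) μ →
        0 < ∫ x, h x * p x ∂μ →
        (∫ x, π x * (1 - π x) * p x ∂μ)⁻¹ ≤ R h)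
    ∧ (∀ c : ℝ, 0 < c →
        R (fun x => c * (π x * (1 - π x)))
          = (∫ x, π x * (1 - π x) * p x ∂μ)⁻¹) :=
  stmt11_general μ p hp0 π hπ R hR hIπ hpos
end
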